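/- Let α be a finite type and let p, q : α → ℝ be probability mass functions with full support, i.e., p h > 0 and q h > 0 for all h. Then the supremum, over all functions D : α → ℝ with 0 < D h < 1 for all h, of Σ_h (p h · log(D h) + q h · log(1 − D h)) equals −log 4 + 2·JS(p,q), and this supremum is attained at D h = p h/(p h + q h). -/

import Mathlib

open Real Finset

/-- Jensen–Shannon divergence between two probability mass functions on a finite type. -/
noncomputable def JS {α : Type*} [Fintype α] (p q : α → ℝ) : ℝ :=
  (1/2) * ∑ h, p h * Real.log (2 * p h / (p h + q h)) +
  (1/2) * ∑ h, q h * Real.log (2 * q h / (p h + q h))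

/-! The objective splits into independent terms `p h * log d + q h * log (1 - d)`, and each is
maximised at `d = p h / (p h + q h)`: this is Gibbs' inequality for two-point distributions,
which follows from `log x ≤ x - 1`. At the maximiser, `log (2x) = log 2 + log x` together with
`∑ p = ∑ q = 1` turns the value into `2 · JS p q - log 4`. -/

lemma mul_log_le_mul_log_add {a x y : ℝ} (ha : 0 ≤ a) (hx : 0 < x) (hy : 0 < y) :
    a * log x ≤ a * log y + a * (x / y - 1) := by
  have hlog : log x - log y ≤ x / y - 1 := by
    rw [← log_div hx.ne' hy.ne']
    exact log_le_sub_one_of_pos (div_pos hx hy)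
  nlinarith [mul_le_mul_of_nonneg_left hlog ha]

lemma mul_log_add_mul_log_one_sub_le {a b d : ℝ} (ha : 0 < a) (hb : 0 < b)
    (hd0 : 0 < d) (hd1 : d < 1) :
    a * log d + b * log (1 - d) ≤
      a * log (a / (a + b)) + b * log (1 - a / (a + b)) := by
  have hab : a + b ≠ 0 := (add_pos ha hb).ne'
  have hcompl : 1 - a / (a + b) = b / (a + b) := by
    rw [one_sub_div hab, add_sub_cancel_left]
  have h₁ := mul_log_le_mul_log_add ha.le hd0 (div_pos ha (add_pos ha hb))
  have h₂ := mul_log_le_mul_log_add hb.le (sub_pos.2 hd1) (div_pos hb (add_pos ha hb))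
  have hcancel : a * (d / (a / (a + b)) - 1) + b * ((1 - d) / (b / (a + b)) - 1) = 0 := by
    field_simp
    ring
  rw [hcompl]
  linarith

lemma mul_log_two_mul_div (a : ℝ) {c : ℝ} (hc : c ≠ 0) :
    a * log (2 * a / c) = a * log 2 + a * log (a / c) := by
  rcases eq_or_ne a 0 with rfl | ha
  · simp
  · rw [mul_div_assoc, log_mul two_ne_zero (div_ne_zero ha hc), mul_add]

lemma two_mul_JS_eq {α : Type*} [Fintype α] {p q : α → ℝ} (hpq : ∀ h, p h + q h ≠ 0)
    (hp1 : ∑ h, p h = 1) (hq1 : ∑ h, q h = 1) :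
    2 * JS p q =
      log 4 + ∑ h, (p h * log (p h / (p h + q h)) + q h * log (q h / (p h + q h))) := by
  have hlog4 : log 4 = 2 * log 2 := by
    rw [show (4 : ℝ) = 2 ^ 2 by norm_num, log_pow, Nat.cast_ofNat]
  simp only [JS, mul_log_two_mul_div _ (hpq _), sum_add_distrib, ← sum_mul, hp1, hq1, hlog4]
  ring

/-- The supremum of the adversarial objective over discriminators `D : α → (0,1)` equals
`−log 4 + 2·JS(p,q)`, attained at `D = p/(p+q)`. -/
theorem bfts_sup_adversarial_objective (α : Type*) [Fintype α] (p q : α → ℝ)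
    (hp : ∀ h, 0 < p h) (hq : ∀ h, 0 < q h)
    (hp1 : ∑ h, p h = 1) (hq1 : ∑ h, q h = 1) :
    IsGreatest
      {v : ℝ | ∃ D : α → ℝ, (∀ h, 0 < D h ∧ D h < 1) ∧
        v = ∑ h, (p h * Real.log (D h) + q h * Real.log (1 - D h))}
      (-Real.log 4 + 2 * JS p q) ∧
    (∑ h, (p h * Real.log (p h / (p h + q h)) +
        q h * Real.log (1 - p h / (p h + q h))) = -Real.log 4 + 2 * JS p q) := by
  have hpq : ∀ h, p h + q h ≠ 0 := fun h => (add_pos (hp h) (hq h)).ne'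
  have hval : ∑ h, (p h * log (p h / (p h + q h)) + q h * log (1 - p h / (p h + q h))) =
      -log 4 + 2 * JS p q := by
    simp only [two_mul_JS_eq hpq hp1 hq1, one_sub_div (hpq _), add_sub_cancel_left]
    ring
  have hopt : ∀ h, 0 < p h / (p h + q h) ∧ p h / (p h + q h) < 1 := fun h =>
    ⟨div_pos (hp h) (add_pos (hp h) (hq h)),
      (div_lt_one (add_pos (hp h) (hq h))).2 (lt_add_of_pos_right _ (hq h))⟩
  refine ⟨⟨⟨fun h => p h / (p h + q h), hopt, hval.symm⟩, ?_⟩, hval⟩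
  rintro v ⟨D, hD, rfl⟩
  rw [← hval]
  exact sum_le_sum fun h _ => mul_log_add_mul_log_one_sub_le (hp h) (hq h) (hD h).1 (hD h).2
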